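/- Exhaustion of the level sets. Let ε > 0 and suppose G is a (c,d)-regular (⌊2k/(1+2ε)+1⌋, 1/2+ε)-expander, and suppose |X_+| ≤ k. Then for every ℓ ≥ 1, |S_ℓ| ≥ 2ε·|S' ∖ ∪_{1≤ℓ'<ℓ} S_{ℓ'}|; consequently |S' ∖ ∪_{1≤ℓ'≤ℓ} S_{ℓ'}| ≤ (1−2ε)^ℓ·|S'| for all ℓ ≥ 0, and S_ℓ = ∅ whenever (1−2ε)^{ℓ−1}·|S'| < 1. -/

import Mathlib

open Finset

namespace MP

/-- Neighborhood of a left vertex `i ∈ X`: the measurements involving `i`. -/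
def nhdX {n m : ℕ} (A : Fin m → Fin n → Bool) (i : Fin n) : Finset (Fin m) :=
  Finset.univ.filter (fun j => A j i = true)

/-- Neighborhood of a right vertex `j ∈ Y`. -/
def nhdY {n m : ℕ} (A : Fin m → Fin n → Bool) (j : Fin m) : Finset (Fin n) :=
  Finset.univ.filter (fun i => A j i = true)

/-- `Γ(S)`, the set of neighbors of `S ⊆ X`. -/
def Gam {n m : ℕ} (A : Fin m → Fin n → Bool) (S : Finset (Fin n)) : Finset (Fin m) :=
  S.biUnion (nhdX A)

/-- The measurement vector `y = A x`. -/
noncomputable def yvec {n m : ℕ} (A : Fin m → Fin n → Bool) (x : Fin n → ℝ) (j : Fin m) : ℝ :=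
  ∑ i ∈ nhdY A j, x i

/-- Message from measurement `j` to variable `i`, given current variable messages `z`:
`y_j - ∑_{k ∈ N_y(j) \ {i}} z_k`. -/
noncomputable def msgY {n m : ℕ} (A : Fin m → Fin n → Bool) (x z : Fin n → ℝ)
    (j : Fin m) (i : Fin n) : ℝ :=
  yvec A x j - ∑ k ∈ (nhdY A j).erase i, z k

/-- The algorithm's estimate `x̂^s` (equal to the variable-to-check message `m_{i→j}^s`,
which does not depend on `j`).  At odd times it is the min of incoming check messages;
at even times `s+1` it is `max(0, max of incoming check messages)`. -/
noncomputable def xhat {n m : ℕ} (A : Fin m → Fin n → Bool) (x : Fin n → ℝ) :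
    ℕ → Fin n → ℝ
  | 0 => fun _ => 0
  | s + 1 => fun i =>
      if Even (s + 1) then
        max 0 (sSup ((fun l => msgY A x (xhat A x s) l i) '' (↑(nhdX A i) : Set (Fin m))))
      else
        sInf ((fun l => msgY A x (xhat A x s) l i) '' (↑(nhdX A i) : Set (Fin m)))

/-- The variable-to-check message `m_{i→j}^s` (independent of `j`). -/
noncomputable def mXY {n m : ℕ} (A : Fin m → Fin n → Bool) (x : Fin n → ℝ)
    (s : ℕ) (i : Fin n) (_j : Fin m) : ℝ := xhat A x s i

/-- The check-to-variable message `m_{j→i}^s`. -/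
noncomputable def mYX {n m : ℕ} (A : Fin m → Fin n → Bool) (x : Fin n → ℝ)
    (s : ℕ) (j : Fin m) (i : Fin n) : ℝ := msgY A x (xhat A x s) j i

/-- `G` is `(c,d)`-regular. -/
def IsRegular {n m : ℕ} (A : Fin m → Fin n → Bool) (c d : ℕ) : Prop :=
  (∀ i, (nhdX A i).card = c) ∧ (∀ j, (nhdY A j).card = d)

/-- `G` is a `(kk, α)`-expander (w.r.t. left degree `c`). -/
def IsExpander {n m : ℕ} (A : Fin m → Fin n → Bool) (c kk : ℕ) (α : ℝ) : Prop :=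
  ∀ S : Finset (Fin n), S.card ≤ kk → α * c * S.card ≤ ((Gam A S).card : ℝ)

/-- ℓ¹ norm on `ℝⁿ`. -/
noncomputable def l1 {n : ℕ} (u : Fin n → ℝ) : ℝ := ∑ i, |u i|

/-- `z` has at most `k` nonzero entries. -/
def IsKSparse {n : ℕ} (k : ℕ) (z : Fin n → ℝ) : Prop :=
  (Finset.univ.filter (fun i => z i ≠ 0)).card ≤ k

/-- `xk` is a best `k`-sparse nonnegative approximation of `x` in ℓ¹. -/
def BestKSparse {n : ℕ} (k : ℕ) (x xk : Fin n → ℝ) : Prop :=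
  (∀ i, 0 ≤ xk i) ∧ IsKSparse k xk ∧
    ∀ z : Fin n → ℝ, (∀ i, 0 ≤ z i) → IsKSparse k z →
      l1 (fun i => x i - xk i) ≤ l1 (fun i => x i - z i)


/-- `S' = {i ∈ X : N_x(i) ⊆ Γ(X₊)}`. -/
def Sprime {n m : ℕ} (A : Fin m → Fin n → Bool) (P : Finset (Fin n)) : Finset (Fin n) :=
  Finset.univ.filter (fun i => nhdX A i ⊆ Gam A P)

/-- One step of the level-set construction: given the union `U` of previous levels
`S_1, …, S_{ℓ-1}`, this is `S_ℓ`. -/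
def nextS {n m : ℕ} (A : Fin m → Fin n → Bool) (P U : Finset (Fin n)) : Finset (Fin n) :=
  (Sprime A P).filter (fun i => ∃ j ∈ Gam A P, nhdY A j ∩ (Sprime A P \ U) = {i})

/-- `Uacc A P ℓ = S_1 ∪ ⋯ ∪ S_ℓ`. -/
def Uacc {n m : ℕ} (A : Fin m → Fin n → Bool) (P : Finset (Fin n)) : ℕ → Finset (Fin n)
  | 0 => ∅
  | l + 1 => Uacc A P l ∪ nextS A P (Uacc A P l)

/-- The level sets `S_ℓ`: `S_0 = X \ S'` and, for `ℓ ≥ 1`,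
`S_ℓ = {i ∈ S' : ∃ j ∈ Γ(X₊), N_y(j) ∩ (S' \ (S_1 ∪ ⋯ ∪ S_{ℓ-1})) = {i}}`. -/
def Slevel {n m : ℕ} (A : Fin m → Fin n → Bool) (P : Finset (Fin n)) : ℕ → Finset (Fin n)
  | 0 => Finset.univ \ Sprime A P
  | l + 1 => nextS A P (Uacc A P l)

end MP

/-!
Since `S' ⊆ X` has all its neighbours in `Γ(X₊)`, which has at most `ck` vertices, expansion
forces `|S'| ≤ ⌊2k/(1+2ε)+1⌋`, so every `T ⊆ S'` satisfies `|Γ(T)| ≥ (1/2+ε)c|T|`. Counting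
edges, such a `T` has at least `2|Γ(T)| - c|T| ≥ 2εc|T|` unique neighbours. The unique
neighbour of a vertex of `T = S' ∖ (S_1 ∪ ⋯ ∪ S_{ℓ-1})` puts that vertex into `S_ℓ`, and `S_ℓ`
has at most `c|S_ℓ|` neighbours, so `|S_ℓ| ≥ 2ε|T|`; iterating gives the geometric decay.
-/

namespace MP

section Neighborhoods

variable {n m : ℕ} (A : Fin m → Fin n → Bool)

lemma mem_nhdX {i : Fin n} {j : Fin m} : j ∈ nhdX A i ↔ A j i = true := by
  simp [nhdX]

lemma mem_nhdY {i : Fin n} {j : Fin m} : i ∈ nhdY A j ↔ A j i = true := by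
  simp [nhdY]

lemma mem_nhdY_iff_mem_nhdX {i : Fin n} {j : Fin m} : i ∈ nhdY A j ↔ j ∈ nhdX A i := by
  rw [mem_nhdX, mem_nhdY]

lemma card_Gam_le {c : ℕ} (hreg : ∀ i, #(nhdX A i) = c) (S : Finset (Fin n)) :
    #(Gam A S) ≤ c * #S := by
  calc #(Gam A S) ≤ ∑ i ∈ S, #(nhdX A i) := card_biUnion_le
    _ = c * #S := by simp [hreg, mul_comm]

lemma sum_card_nhdY_inter_eq_sum_card_nhdX (T : Finset (Fin n)) :
    ∑ j ∈ Gam A T, #(nhdY A j ∩ T) = ∑ i ∈ T, #(nhdX A i) := by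
  have hX : ∀ i ∈ T, (Gam A T).bipartiteAbove (fun i j => A j i = true) i = nhdX A i :=
    fun i hi => by
      ext j
      simp only [bipartiteAbove, mem_filter, mem_nhdX, and_iff_right_iff_imp]
      exact fun hj => mem_biUnion.2 ⟨i, hi, (mem_nhdX A).2 hj⟩
  have hY : ∀ j, T.bipartiteBelow (fun i j => A j i = true) j = nhdY A j ∩ T := fun j => by
    ext i
    simp [bipartiteBelow, mem_nhdY, and_comm]
  rw [← sum_congr rfl fun i hi => congrArg card (hX i hi),
    sum_card_bipartiteAbove_eq_sum_card_bipartiteBelow]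
  simp only [hY]

def uniqueNeighbors (T : Finset (Fin n)) : Finset (Fin m) :=
  (Gam A T).filter (fun j => #(nhdY A j ∩ T) = 1)

/-- Every vertex of `Γ(T)` that is not a unique neighbor is counted at least twice in the
degree sum of `T`. -/
lemma two_mul_card_Gam_le (T : Finset (Fin n)) :
    2 * #(Gam A T) ≤ ∑ i ∈ T, #(nhdX A i) + #(uniqueNeighbors A T) := by
  have hpt : ∀ j ∈ Gam A T, 2 ≤ #(nhdY A j ∩ T) + if #(nhdY A j ∩ T) = 1 then 1 else 0 := by
    intro j hj
    obtain ⟨i, hiT, hji⟩ := mem_biUnion.1 hj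
    have : 0 < #(nhdY A j ∩ T) :=
      card_pos.2 ⟨i, mem_inter.2 ⟨(mem_nhdY_iff_mem_nhdX A).2 hji, hiT⟩⟩
    split_ifs <;> omega
  calc 2 * #(Gam A T) = ∑ _j ∈ Gam A T, 2 := by rw [sum_const, smul_eq_mul, mul_comm]
    _ ≤ ∑ j ∈ Gam A T, (#(nhdY A j ∩ T) + if #(nhdY A j ∩ T) = 1 then 1 else 0) :=
      sum_le_sum hpt
    _ = ∑ i ∈ T, #(nhdX A i) + #(uniqueNeighbors A T) := by
      rw [sum_add_distrib, sum_card_nhdY_inter_eq_sum_card_nhdX, uniqueNeighbors, card_filter]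

end Neighborhoods

section LevelSets

variable {n m : ℕ} (A : Fin m → Fin n → Bool) (P : Finset (Fin n))

lemma Gam_subset_Gam_of_subset_Sprime {T : Finset (Fin n)} (hT : T ⊆ Sprime A P) :
    Gam A T ⊆ Gam A P := by
  intro j hj
  obtain ⟨i, hi, hji⟩ := mem_biUnion.1 hj
  exact (mem_filter.1 (hT hi)).2 hji

lemma nextS_subset_sdiff (U : Finset (Fin n)) : nextS A P U ⊆ Sprime A P \ U := by
  intro i hi
  obtain ⟨-, j, -, hj⟩ := mem_filter.1 hi
  exact (mem_inter.1 (hj ▸ mem_singleton_self i)).2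

lemma uniqueNeighbors_subset_Gam_nextS (U : Finset (Fin n)) :
    uniqueNeighbors A (Sprime A P \ U) ⊆ Gam A (nextS A P U) := by
  intro j hj
  obtain ⟨hjG, hj1⟩ := mem_filter.1 hj
  obtain ⟨i, hi⟩ := card_eq_one.1 hj1
  obtain ⟨hiY, hiT⟩ := mem_inter.1 (hi ▸ mem_singleton_self i)
  have hjP : j ∈ Gam A P := Gam_subset_Gam_of_subset_Sprime A P sdiff_subset hjG
  have hiS : i ∈ nextS A P U := mem_filter.2 ⟨(mem_sdiff.1 hiT).1, j, hjP, hi⟩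
  exact mem_biUnion.2 ⟨i, hiS, (mem_nhdY_iff_mem_nhdX A).1 hiY⟩

lemma card_Sprime_sdiff_Uacc_succ (l : ℕ) :
    (#(Sprime A P \ Uacc A P (l + 1)) : ℝ) =
      #(Sprime A P \ Uacc A P l) - #(Slevel A P (l + 1)) := by
  have hsub : Slevel A P (l + 1) ⊆ Sprime A P \ Uacc A P l := nextS_subset_sdiff A P _
  have heq : Sprime A P \ Uacc A P (l + 1) = (Sprime A P \ Uacc A P l) \ Slevel A P (l + 1) := by
    rw [Uacc, Slevel, sdiff_sdiff_left]
    rfl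
  rw [heq, card_sdiff_of_subset hsub, Nat.cast_sub (card_le_card hsub)]

variable {c k K : ℕ} {α ε : ℝ}

lemma card_Sprime_le_of_isExpander (hreg : ∀ i, #(nhdX A i) = c) (hexp : IsExpander A c K α)
    (hP : #P ≤ k) (hK : (c : ℝ) * k < α * c * K) : #(Sprime A P) ≤ K := by
  by_contra! hlt
  obtain ⟨T, hTS, hTK⟩ := exists_subset_card_eq hlt.le
  have hΓ : #(Gam A T) ≤ c * k :=
    calc #(Gam A T) ≤ #(Gam A P) := card_le_card (Gam_subset_Gam_of_subset_Sprime A P hTS)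
      _ ≤ c * #P := card_Gam_le A hreg P
      _ ≤ c * k := Nat.mul_le_mul_left c hP
  have := hexp T hTK.le
  rw [hTK] at this
  have : (#(Gam A T) : ℝ) ≤ c * k := by exact_mod_cast hΓ
  linarith

lemma two_mul_mul_card_le_card_nextS (hc : 0 < c) (hreg : ∀ i, #(nhdX A i) = c)
    (hexp : IsExpander A c K (1 / 2 + ε)) (hK : #(Sprime A P) ≤ K) (U : Finset (Fin n)) :
    2 * ε * #(Sprime A P \ U) ≤ #(nextS A P U) := by
  set T := Sprime A P \ U
  have hexpT : (1 / 2 + ε) * c * #T ≤ #(Gam A T) :=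
    hexp T ((card_le_card sdiff_subset).trans hK)
  have hunique : (2 * #(Gam A T) : ℝ) ≤ c * #T + #(uniqueNeighbors A T) := by
    have := two_mul_card_Gam_le A T
    simp only [hreg, sum_const, smul_eq_mul] at this
    exact_mod_cast this.trans_eq (by ring)
  have hnext : (#(uniqueNeighbors A T) : ℝ) ≤ c * #(nextS A P U) := by
    exact_mod_cast (card_le_card (uniqueNeighbors_subset_Gam_nextS A P U)).trans
      (card_Gam_le A hreg _)
  have hcpos : (0 : ℝ) < c := by exact_mod_cast hc
  refine le_of_mul_le_mul_left ?_ hcpos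
  linarith

end LevelSets

lemma mul_lt_mul_floor_two_mul_div {c k : ℕ} (hc : 0 < c) {ε : ℝ} (hε : 0 < ε) :
    (c : ℝ) * k < (1 / 2 + ε) * c * ⌊2 * (k : ℝ) / (1 + 2 * ε) + 1⌋₊ := by
  have hfloor := Nat.sub_one_lt_floor (2 * (k : ℝ) / (1 + 2 * ε) + 1)
  have hpos : 0 < (1 / 2 + ε) * c := by positivity
  calc (c : ℝ) * k = (1 / 2 + ε) * c * (2 * k / (1 + 2 * ε)) := by field_simp
    _ < (1 / 2 + ε) * c * ⌊2 * (k : ℝ) / (1 + 2 * ε) + 1⌋₊ :=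
      mul_lt_mul_of_pos_left (by linarith) hpos

lemma le_geom_of_nonneg {u : ℕ → ℝ} {c : ℝ} (hu : ∀ k, 0 ≤ u k) (h : ∀ k, u (k + 1) ≤ c * u k)
    (n : ℕ) : u n ≤ c ^ n * u 0 := by
  rcases le_or_gt 0 c with hc | hc
  · exact le_geom hc n fun k _ => h k
  · have hzero : ∀ k, u k = 0 := by
      intro k
      induction k with
      | zero => nlinarith [h 0, hu 0, hu 1]
      | succ k ih => exact le_antisymm (by simpa [ih] using h k) (hu _)
    simp [hzero]

end MP

open MP Finset

theorem level_set_exhaustion_general (n m c d k : ℕ)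
    (hc : 0 < c)
    (A : Fin m → Fin n → Bool) (ε : ℝ) (hε : 0 < ε)
    (hreg : IsRegular A c d)
    (hexp : IsExpander A c (Nat.floor (2 * (k : ℝ) / (1 + 2 * ε) + 1)) (1 / 2 + ε))
    (P : Finset (Fin n)) (hP : P.card ≤ k) :
    (∀ l : ℕ, 2 * ε * (((Sprime A P \ Uacc A P l)).card : ℝ) ≤
        ((Slevel A P (l + 1)).card : ℝ)) ∧
    (∀ l : ℕ, (((Sprime A P \ Uacc A P l)).card : ℝ) ≤
        (1 - 2 * ε) ^ l * ((Sprime A P).card : ℝ)) ∧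
    (∀ l : ℕ, (1 - 2 * ε) ^ l * ((Sprime A P).card : ℝ) < 1 →
        Slevel A P (l + 1) = ∅) := by
  have hK := card_Sprime_le_of_isExpander A P hreg.1 hexp hP (mul_lt_mul_floor_two_mul_div hc hε)
  have hstep : ∀ l : ℕ, 2 * ε * (#(Sprime A P \ Uacc A P l) : ℝ) ≤ #(Slevel A P (l + 1)) :=
    fun l => two_mul_mul_card_le_card_nextS A P hc hreg.1 hexp hK _
  have hdecay : ∀ l : ℕ, (#(Sprime A P \ Uacc A P l) : ℝ) ≤ (1 - 2 * ε) ^ l * #(Sprime A P) := by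
    intro l
    simpa [Uacc] using le_geom_of_nonneg (u := fun l => (#(Sprime A P \ Uacc A P l) : ℝ))
      (fun _ => Nat.cast_nonneg _)
      (fun l => by rw [card_Sprime_sdiff_Uacc_succ]; linarith [hstep l]) l
  refine ⟨hstep, hdecay, fun l hl => subset_empty.1 ?_⟩
  have hempty : Sprime A P \ Uacc A P l = ∅ := by
    rw [← card_eq_zero, ← Nat.lt_one_iff]
    exact_mod_cast (hdecay l).trans_lt hl
  exact hempty ▸ nextS_subset_sdiff A P _

/-- **Exhaustion of the level sets.** For `ℓ ≥ 1`,
`|S_ℓ| ≥ 2ε·|S' \ (S_1 ∪ ⋯ ∪ S_{ℓ-1})|`; consequently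
`|S' \ (S_1 ∪ ⋯ ∪ S_ℓ)| ≤ (1-2ε)^ℓ |S'|`, and `S_ℓ = ∅` once `(1-2ε)^{ℓ-1}|S'| < 1`. -/
theorem level_set_exhaustion (n m c d k : ℕ)
    (hn : 0 < n) (hm : 0 < m) (hc : 0 < c) (hd : 0 < d) (hk : 0 < k)
    (A : Fin m → Fin n → Bool) (ε : ℝ) (hε : 0 < ε)
    (hreg : IsRegular A c d)
    (hexp : IsExpander A c (Nat.floor (2 * (k : ℝ) / (1 + 2 * ε) + 1)) (1 / 2 + ε))
    (P : Finset (Fin n)) (hP : P.card ≤ k) :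
    (∀ l : ℕ, 2 * ε * (((Sprime A P \ Uacc A P l)).card : ℝ) ≤
        ((Slevel A P (l + 1)).card : ℝ)) ∧
    (∀ l : ℕ, (((Sprime A P \ Uacc A P l)).card : ℝ) ≤
        (1 - 2 * ε) ^ l * ((Sprime A P).card : ℝ)) ∧
    (∀ l : ℕ, (1 - 2 * ε) ^ l * ((Sprime A P).card : ℝ) < 1 →
        Slevel A P (l + 1) = ∅) :=
  level_set_exhaustion_general n m c d k hc A ε hε hreg hexp P hP
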